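/- arXiv:2504.17727 — 4 statements merged into one kernel-verified Lean document; each statement's English description precedes it below -/
import Mathlib

section
/- Let K ⊆ ℂ^n be a nonempty compact set. Then for every multi-index α ∈ ℕ^n with |α| ≥ 1, the Chebyshev number satisfies t_K(α) ≥ (τ⁻(K))^{|α|}; that is, every polynomial of the form P(z) = z^α + Σ_{β ≺ α} c_β z^β has sup_{z∈K} |P(z)| ≥ (τ⁻(K))^{|α|}. -/
open MvPolynomial Filter

noncomputable section

/-- `Prec β α` : the multi-index `β` precedes `α` in the graded ordering of the paper:
either `|β| < |α|`, or `|β| = |α|`, `β ≠ α`, and at the smallest index `l` with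
`β l ≠ α l` one has `α l < β l`. -/
def Prec {n : ℕ} (β α : Fin n →₀ ℕ) : Prop :=
  (∑ j, β j) < (∑ j, α j) ∨
    ((∑ j, β j) = (∑ j, α j) ∧
      ∃ l : Fin n, (∀ m, m < l → β m = α m) ∧ α l < β l)

/-- The monic class `𝒫(α)`: polynomials of the form `z ^ α + ∑_{β ≺ α} c_β z ^ β`. -/
def MonicClass {n : ℕ} (α : Fin n →₀ ℕ) (P : MvPolynomial (Fin n) ℂ) : Prop :=
  P.coeff α = 1 ∧ ∀ β : Fin n →₀ ℕ, β ≠ α → P.coeff β ≠ 0 → Prec β α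

/-- The sup-norm `‖P‖_K = sup_{z ∈ K} |P(z)|` of a polynomial on a set `K ⊆ ℂⁿ`. -/
def supNorm {n : ℕ} (K : Set (Fin n → ℂ)) (P : MvPolynomial (Fin n) ℂ) : ℝ :=
  sSup ((fun z => ‖eval z P‖) '' K)

/-- The Chebyshev number `t_K(α) = inf {‖P‖_K : P ∈ 𝒫(α)}`. -/
def chebNumber {n : ℕ} (K : Set (Fin n → ℂ)) (α : Fin n →₀ ℕ) : ℝ :=
  sInf (supNorm K '' {P | MonicClass α P})

/-- `τ⁻(K)`: the liminf of `t_K(α) ^ (1/|α|)` along the cofinite filter on the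
multi-indices `α` with `|α| ≥ 1`. -/
def tauMinus {n : ℕ} (K : Set (Fin n → ℂ)) : ℝ :=
  liminf (fun α : {α : Fin n →₀ ℕ // 1 ≤ ∑ j, α j} =>
    chebNumber K α.1 ^ ((1 : ℝ) / (∑ j, α.1 j : ℕ))) cofinite

/-!
Since `≺` is a strict order invariant under translation, the leading term of a product is the
product of the leading terms, so `P ∈ 𝒫(α)` gives `P ^ k ∈ 𝒫(k • α)`, while `‖P ^ k‖_K ≤ ‖P‖_K ^ k`.
Hence `t_K(k • α) ^ (1 / (k |α|)) ≤ ‖P‖_K ^ (1 / |α|)` for the infinitely many multi-indices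
`k • α`, and so `τ⁻(K) ≤ ‖P‖_K ^ (1 / |α|)`.
-/

lemma sum_univ_finsupp_nsmul {n : ℕ} (k : ℕ) (α : Fin n →₀ ℕ) :
    ∑ j, (k • α) j = k * ∑ j, α j := by
  simp only [Finsupp.smul_apply, smul_eq_mul, Finset.mul_sum]

namespace Prec

variable {n : ℕ}

lemma irrefl (α : Fin n →₀ ℕ) : ¬ Prec α α := by
  rintro (h | ⟨-, l, -, hl⟩) <;> exact lt_irrefl _ ‹_›

lemma trans {a b c : Fin n →₀ ℕ} (hab : Prec a b) (hbc : Prec b c) : Prec a c := by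
  rcases hab with hab | ⟨hsab, l₁, hpre₁, hl₁⟩ <;> rcases hbc with hbc | ⟨hsbc, l₂, hpre₂, hl₂⟩
  · exact Or.inl (hab.trans hbc)
  · exact Or.inl (hsbc ▸ hab)
  · exact Or.inl (hsab ▸ hbc)
  refine Or.inr ⟨hsab.trans hsbc, ?_⟩
  rcases lt_trichotomy l₁ l₂ with h | rfl | h
  · exact ⟨l₁, fun m hm => (hpre₁ m hm).trans (hpre₂ m (hm.trans h)), hpre₂ l₁ h ▸ hl₁⟩
  · exact ⟨l₁, fun m hm => (hpre₁ m hm).trans (hpre₂ m hm), hl₂.trans hl₁⟩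
  · exact ⟨l₂, fun m hm => (hpre₁ m (hm.trans h)).trans (hpre₂ m hm), (hpre₁ l₂ h).symm ▸ hl₂⟩

lemma add_right {β α : Fin n →₀ ℕ} (h : Prec β α) (γ : Fin n →₀ ℕ) :
    Prec (β + γ) (α + γ) := by
  simp only [Prec, Finsupp.add_apply, Finset.sum_add_distrib] at h ⊢
  rcases h with h | ⟨hs, l, hpre, hl⟩
  · exact Or.inl (by omega)
  · exact Or.inr ⟨by omega, l, fun m hm => by rw [hpre m hm], by omega⟩

lemma add_left {β α : Fin n →₀ ℕ} (h : Prec β α) (γ : Fin n →₀ ℕ) :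
    Prec (γ + β) (γ + α) := by
  simpa only [add_comm γ] using h.add_right γ

lemma add_of_eq_or_prec {δ α ε β : Fin n →₀ ℕ} (hd : δ = α ∨ Prec δ α) (he : ε = β ∨ Prec ε β)
    (hne : (δ, ε) ≠ (α, β)) : Prec (δ + ε) (α + β) := by
  rcases hd with rfl | hd <;> rcases he with rfl | he
  · exact absurd rfl hne
  · exact he.add_left δ
  · exact hd.add_right ε
  · exact (hd.add_right ε).trans (he.add_left α)

end Prec

namespace MonicClass

variable {n : ℕ} {α β : Fin n →₀ ℕ} {P Q : MvPolynomial (Fin n) ℂ}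

lemma eq_or_prec (hP : MonicClass α P) {γ : Fin n →₀ ℕ} (hγ : P.coeff γ ≠ 0) :
    γ = α ∨ Prec γ α :=
  or_iff_not_imp_left.mpr fun h => hP.2 γ h hγ

lemma prec_add_of_coeff_mul_ne_zero (hP : MonicClass α P) (hQ : MonicClass β Q)
    {x : (Fin n →₀ ℕ) × (Fin n →₀ ℕ)} (hx : P.coeff x.1 * Q.coeff x.2 ≠ 0)
    (hne : x ≠ (α, β)) : Prec (x.1 + x.2) (α + β) :=
  Prec.add_of_eq_or_prec (hP.eq_or_prec (left_ne_zero_of_mul hx))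
    (hQ.eq_or_prec (right_ne_zero_of_mul hx)) hne

lemma mul (hP : MonicClass α P) (hQ : MonicClass β Q) : MonicClass (α + β) (P * Q) := by
  classical
  constructor
  · rw [coeff_mul, Finset.sum_eq_single_of_mem (α, β) (by simp), hP.1, hQ.1, one_mul]
    intro x hx hne
    by_contra hx0
    have := hP.prec_add_of_coeff_mul_ne_zero hQ hx0 hne
    rw [(Finset.HasAntidiagonal.mem_antidiagonal).mp hx] at this
    exact Prec.irrefl _ this
  · intro γ hγ hc
    rw [coeff_mul] at hc
    obtain ⟨x, hx, hx0⟩ := Finset.exists_ne_zero_of_sum_ne_zero hc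
    obtain rfl := (Finset.HasAntidiagonal.mem_antidiagonal).mp hx
    exact hP.prec_add_of_coeff_mul_ne_zero hQ hx0 (by rintro rfl; exact hγ rfl)

end MonicClass

lemma monicClass_monomial {n : ℕ} (α : Fin n →₀ ℕ) : MonicClass α (monomial α (1 : ℂ)) := by
  refine ⟨by simp, fun β hβ hc => absurd ?_ hc⟩
  simp [coeff_monomial, Ne.symm hβ]

lemma MonicClass.pow {n : ℕ} {α : Fin n →₀ ℕ} {P : MvPolynomial (Fin n) ℂ}
    (hP : MonicClass α P) (k : ℕ) : MonicClass (k • α) (P ^ k) := by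
  induction k with
  | zero => simpa using monicClass_monomial (0 : Fin n →₀ ℕ)
  | succ k ih => simpa only [succ_nsmul, pow_succ] using ih.mul hP

section SupNorm

variable {n : ℕ} {K : Set (Fin n → ℂ)}

lemma supNorm_nonneg (P : MvPolynomial (Fin n) ℂ) : 0 ≤ supNorm K P :=
  Real.sSup_nonneg (by rintro _ ⟨z, -, rfl⟩; exact norm_nonneg _)

lemma norm_eval_le_supNorm (hKc : IsCompact K) (P : MvPolynomial (Fin n) ℂ)
    {z : Fin n → ℂ} (hz : z ∈ K) : ‖eval z P‖ ≤ supNorm K P :=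
  le_csSup (hKc.bddAbove_image (continuous_eval P).norm.continuousOn) ⟨z, hz, rfl⟩

lemma supNorm_pow_le (hKc : IsCompact K) (P : MvPolynomial (Fin n) ℂ) (k : ℕ) :
    supNorm K (P ^ k) ≤ supNorm K P ^ k := by
  refine Real.sSup_le ?_ (pow_nonneg (supNorm_nonneg P) k)
  rintro _ ⟨z, hz, rfl⟩
  simp only [map_pow, norm_pow]
  exact pow_le_pow_left₀ (norm_nonneg _) (norm_eval_le_supNorm hKc P hz) k

lemma chebNumber_le_supNorm {α : Fin n →₀ ℕ} {P : MvPolynomial (Fin n) ℂ}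
    (hP : MonicClass α P) : chebNumber K α ≤ supNorm K P :=
  csInf_le ⟨0, by rintro _ ⟨Q, -, rfl⟩; exact supNorm_nonneg Q⟩ ⟨P, hP, rfl⟩

lemma chebNumber_nonneg (α : Fin n →₀ ℕ) : 0 ≤ chebNumber K α :=
  Real.sInf_nonneg (by rintro _ ⟨P, -, rfl⟩; exact supNorm_nonneg P)

lemma chebNumber_nsmul_le (hKc : IsCompact K) {α : Fin n →₀ ℕ} {P : MvPolynomial (Fin n) ℂ}
    (hP : MonicClass α P) (k : ℕ) : chebNumber K (k • α) ≤ supNorm K P ^ k :=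
  (chebNumber_le_supNorm (hP.pow k)).trans (supNorm_pow_le hKc P k)

end SupNorm

lemma liminf_cofinite_mem_Icc {ι : Type*} {f : ι → ℝ} {a c : ℝ} (hf : ∀ i, a ≤ f i)
    {s : Set ι} (hs : s.Infinite) (hle : ∀ i ∈ s, f i ≤ c) :
    liminf f cofinite ∈ Set.Icc a c := by
  have hfreq : ∃ᶠ i in cofinite, f i ≤ c :=
    frequently_cofinite_iff_infinite.mpr (hs.mono hle)
  exact ⟨le_liminf_of_le (IsCoboundedUnder.of_frequently_le hfreq) (Eventually.of_forall hf),
    liminf_le_of_frequently_le hfreq (isBoundedUnder_of ⟨a, hf⟩)⟩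

lemma tauMinus_mem_Icc {n : ℕ} {K : Set (Fin n → ℂ)} (hKc : IsCompact K)
    {α : Fin n →₀ ℕ} (hα : 1 ≤ ∑ j, α j) {P : MvPolynomial (Fin n) ℂ} (hP : MonicClass α P) :
    tauMinus K ∈ Set.Icc 0 (supNorm K P ^ ((∑ j, α j : ℕ) : ℝ)⁻¹) := by
  set m := ∑ j, α j
  set T := supNorm K P ^ (m : ℝ)⁻¹
  have hT : 0 ≤ T := Real.rpow_nonneg (supNorm_nonneg P) _
  have hTm : T ^ m = supNorm K P := Real.rpow_inv_natCast_pow (supNorm_nonneg P) (by omega)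
  have hsum : ∀ k : ℕ, ∑ j, ((k + 1) • α) j = (k + 1) * m := fun k => sum_univ_finsupp_nsmul _ α
  let g : ℕ → {β : Fin n →₀ ℕ // 1 ≤ ∑ j, β j} :=
    fun k => ⟨(k + 1) • α, (hsum k).symm ▸ Nat.one_le_iff_ne_zero.mpr (by positivity)⟩
  have hg : Function.Injective g := fun k l hkl => by
    have := congrArg (fun β => ∑ j, β.1 j) hkl
    simp only [g, hsum] at this
    exact Nat.succ_injective (Nat.eq_of_mul_eq_mul_right hα this)
  have hbound : ∀ k, chebNumber K (g k).1 ^ ((1 : ℝ) / (∑ j, (g k).1 j : ℕ)) ≤ T := by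
    intro k
    have hN : (0 : ℝ) < ((k + 1) * m : ℕ) := by positivity
    simp only [g, hsum, one_div]
    rw [Real.rpow_inv_le_iff_of_pos (chebNumber_nonneg _) hT hN, Real.rpow_natCast, pow_mul', hTm]
    exact chebNumber_nsmul_le hKc hP (k + 1)
  exact liminf_cofinite_mem_Icc (fun β => Real.rpow_nonneg (chebNumber_nonneg β.1) _)
    (Set.infinite_range_of_injective hg) (by rintro _ ⟨k, rfl⟩; exact hbound k)

lemma tauMinus_pow_le_supNorm {n : ℕ} {K : Set (Fin n → ℂ)} (hKc : IsCompact K)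
    {α : Fin n →₀ ℕ} (hα : 1 ≤ ∑ j, α j) {P : MvPolynomial (Fin n) ℂ} (hP : MonicClass α P) :
    tauMinus K ^ (∑ j, α j) ≤ supNorm K P := by
  obtain ⟨hτ₀, hτ⟩ := tauMinus_mem_Icc hKc hα hP
  calc tauMinus K ^ (∑ j, α j)
      ≤ (supNorm K P ^ ((∑ j, α j : ℕ) : ℝ)⁻¹) ^ (∑ j, α j) := pow_le_pow_left₀ hτ₀ hτ _
    _ = supNorm K P := Real.rpow_inv_natCast_pow (supNorm_nonneg P) (by omega)

theorem chebNumber_ge_tauMinus_pow_general {n : ℕ} (K : Set (Fin n → ℂ))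
    (hKc : IsCompact K)
    (α : Fin n →₀ ℕ) (hα : 1 ≤ ∑ j, α j) :
    chebNumber K α ≥ tauMinus K ^ (∑ j, α j) ∧
      ∀ P : MvPolynomial (Fin n) ℂ, MonicClass α P →
        supNorm K P ≥ tauMinus K ^ (∑ j, α j) := by
  have hbound : ∀ P, MonicClass α P → tauMinus K ^ (∑ j, α j) ≤ supNorm K P :=
    fun _ => tauMinus_pow_le_supNorm hKc hα
  refine ⟨le_csInf ⟨_, monomial α 1, monicClass_monomial α, rfl⟩ ?_, hbound⟩
  rintro _ ⟨P, hP, rfl⟩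
  exact hbound P hP

/-- for a nonempty compact `K ⊆ ℂⁿ` and any multi-index `α` with `|α| ≥ 1`,
`t_K(α) ≥ τ⁻(K) ^ |α|`; that is, every `P ∈ 𝒫(α)` has `‖P‖_K ≥ τ⁻(K) ^ |α|`. -/
theorem chebNumber_ge_tauMinus_pow {n : ℕ} (K : Set (Fin n → ℂ))
    (hKne : K.Nonempty) (hKc : IsCompact K)
    (α : Fin n →₀ ℕ) (hα : 1 ≤ ∑ j, α j) :
    chebNumber K α ≥ tauMinus K ^ (∑ j, α j) ∧
      ∀ P : MvPolynomial (Fin n) ℂ, MonicClass α P →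
        supNorm K P ≥ tauMinus K ^ (∑ j, α j) :=
  chebNumber_ge_tauMinus_pow_general K hKc α hα
end
end

section
/- For each j = 1,…,n let K_j ⊂ ℂ be a nonempty compact set and μ_j a finite positive Borel measure on K_j, and let μ = μ_1 ⊗ ⋯ ⊗ μ_n on K = K_1 × ⋯ × K_n. Let α ∈ ℕ^n and for each j let P_j be a monic polynomial of degree α_j orthogonal in L²(μ_j) to every polynomial of degree strictly less than α_j (with P_j = 1 when α_j = 0). Then ‖Π_{j=1}^n P_j(z_j)‖_{L²(μ)} = Π_{j=1}^n ‖P_j‖_{L²(μ_j)}, and for every polynomial P in the monic class 𝒫(α) one has ‖P‖_{L²(μ)} ≥ Π_{j=1}^n ‖P_j‖_{L²(μ_j)}; i.e., the product Π_j P_j(z_j) is a monic orthogonal polynomial minimizing the L²(μ) norm over 𝒫(α). -/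
open MvPolynomial Filter

noncomputable section

/-!
Write `G z = ∏ j, P_j (z_j)`. Fubini factors `‖G‖²` into `∏ j, ‖P_j‖²`. For `Q ∈ 𝒫(α)` expand `Q`
into monomials: by Fubini again `⟪z ^ β, G⟫ = ∏ j, ⟪t ^ β_j, P_j⟫`, which vanishes as soon as
`β_k < α_k` for one `k`, hence for every `β ≺ α`, while `⟪z ^ α, G⟫ = ‖G‖²` because `P_j` is monic
and orthogonal to lower degrees. So `⟪Q, G⟫ = ‖G‖²`, and Cauchy–Schwarz gives `‖G‖ ≤ ‖Q‖`.
-/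

open MeasureTheory ComplexConjugate

theorem Prec.exists_lt {n : ℕ} {β α : Fin n →₀ ℕ} (h : Prec β α) : ∃ k, β k < α k := by
  by_contra! hle
  rcases h with hlt | ⟨hsum, l, -, hl⟩
  · exact (Finset.sum_le_sum fun j _ => hle j).not_gt hlt
  · exact (Finset.sum_lt_sum (fun j _ => hle j) ⟨l, Finset.mem_univ l, hl⟩).ne' hsum

theorem Continuous.memLp_of_ae_mem_compact {X E : Type*} [TopologicalSpace X]
    [MeasurableSpace X] [OpensMeasurableSpace X] [NormedAddCommGroup E]
    [SecondCountableTopologyEither X E] {μ : Measure X} [IsFiniteMeasure μ] {K : Set X}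
    (hK : IsCompact K) (hμK : ∀ᵐ x ∂μ, x ∈ K) {f : X → E} (hf : Continuous f)
    (p : ENNReal) : MemLp f p μ := by
  obtain ⟨C, hC⟩ := hK.exists_bound_of_continuousOn hf.continuousOn
  exact MemLp.of_bound hf.aestronglyMeasurable C (hμK.mono hC)

theorem Real.sqrt_le_of_le_mul_sqrt {a b : ℝ} (ha : 0 ≤ a) (hb : 0 ≤ b) (h : a ≤ b * √a) :
    √a ≤ b := by
  nlinarith [Real.sq_sqrt ha, Real.sqrt_nonneg a]

theorem norm_integral_mul_conj_le {X : Type*} [MeasurableSpace X] {μ : Measure X}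
    {f g : X → ℂ} (hf : MemLp f 2 μ) (hg : MemLp g 2 μ) :
    ‖∫ x, f x * conj (g x) ∂μ‖ ≤ √(∫ x, ‖f x‖ ^ 2 ∂μ) * √(∫ x, ‖g x‖ ^ 2 ∂μ) := by
  have holder := integral_mul_norm_le_Lp_mul_Lq Real.HolderConjugate.two_two
    (by simpa using hf) (by simpa using hg)
  simp only [Real.rpow_two, ← Real.sqrt_eq_rpow] at holder
  refine (norm_integral_le_integral_norm _).trans (le_of_eq_of_le ?_ holder)
  simp_rw [norm_mul, RCLike.norm_conj]

theorem integral_norm_prod_sq_eq_prod {ι : Type*} [Fintype ι] {E : ι → Type*}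
    [∀ i, MeasurableSpace (E i)] {μ : ∀ i, Measure (E i)} [∀ i, SigmaFinite (μ i)]
    (f : ∀ i, E i → ℂ) :
    ∫ x, ‖∏ i, f i (x i)‖ ^ 2 ∂(Measure.pi μ) = ∏ i, ∫ t, ‖f i t‖ ^ 2 ∂(μ i) := by
  simp_rw [norm_prod, ← Finset.prod_pow]
  exact integral_fintype_prod_eq_prod fun i t => ‖f i t‖ ^ 2

theorem integral_prod_mul_conj_prod_eq_prod {ι : Type*} [Fintype ι] {E : ι → Type*}
    [∀ i, MeasurableSpace (E i)] {μ : ∀ i, Measure (E i)} [∀ i, SigmaFinite (μ i)]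
    (f g : ∀ i, E i → ℂ) :
    ∫ x, (∏ i, f i (x i)) * conj (∏ i, g i (x i)) ∂(Measure.pi μ) =
      ∏ i, ∫ t, f i t * conj (g i t) ∂(μ i) := by
  simp_rw [map_prod, ← Finset.prod_mul_distrib]
  exact integral_fintype_prod_eq_prod fun i t => f i t * conj (g i t)

theorem ae_mem_univ_pi {ι : Type*} [Fintype ι] {E : ι → Type*} [∀ i, MeasurableSpace (E i)]
    {μ : ∀ i, Measure (E i)} [∀ i, SigmaFinite (μ i)] {K : ∀ i, Set (E i)}
    (hμK : ∀ i, ∀ᵐ t ∂(μ i), t ∈ K i) : ∀ᵐ x ∂(Measure.pi μ), x ∈ Set.univ.pi K :=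
  (eventually_all.2 fun i => Measure.tendsto_eval_ae_ae.eventually (hμK i)).mono
    fun _ hx => Set.mem_univ_pi.2 hx

open scoped Polynomial

def Polynomial.IsOrthogonalToLowerDegree (μ : Measure ℂ) (P : ℂ[X]) : Prop :=
  ∀ q : ℂ[X], q.degree < (P.natDegree : WithBot ℕ) →
    ∫ t, P.eval t * conj (q.eval t) ∂μ = 0

namespace Polynomial.IsOrthogonalToLowerDegree

variable {μ : Measure ℂ} {P : ℂ[X]}

theorem integral_mul_conj_eq_zero (hP : IsOrthogonalToLowerDegree μ P) {q : ℂ[X]}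
    (hq : q.degree < (P.natDegree : WithBot ℕ)) : ∫ t, q.eval t * conj (P.eval t) ∂μ = 0 :=
  calc ∫ t, q.eval t * conj (P.eval t) ∂μ
      = ∫ t, conj (P.eval t * conj (q.eval t)) ∂μ := by
        simp_rw [map_mul, Complex.conj_conj, mul_comm]
    _ = conj (∫ t, P.eval t * conj (q.eval t) ∂μ) := integral_conj
    _ = 0 := by rw [hP q hq, map_zero]

theorem integral_pow_mul_conj_eq_zero (hP : IsOrthogonalToLowerDegree μ P) {m : ℕ}
    (hm : m < P.natDegree) : ∫ t, t ^ m * conj (P.eval t) ∂μ = 0 := by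
  simpa using hP.integral_mul_conj_eq_zero (q := Polynomial.X ^ m)
    (by rw [Polynomial.degree_X_pow]; exact_mod_cast hm)

theorem integral_pow_natDegree_mul_conj [IsFiniteMeasure μ] {K : Set ℂ} (hK : IsCompact K)
    (hμK : ∀ᵐ t ∂μ, t ∈ K) (hP : IsOrthogonalToLowerDegree μ P) (hmonic : P.Monic) :
    ∫ t, t ^ P.natDegree * conj (P.eval t) ∂μ = ((∫ t, ‖P.eval t‖ ^ 2 ∂μ : ℝ) : ℂ) := by
  have integrable (q : ℂ[X]) : Integrable (fun t => q.eval t * conj (P.eval t)) μ :=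
    memLp_one_iff_integrable.1 <| (q.continuous.mul
      (Complex.continuous_conj.comp P.continuous)).memLp_of_ae_mem_compact hK hμK 1
  have hlow : P.eraseLead.degree < (P.natDegree : WithBot ℕ) := by
    rw [← degree_eq_natDegree hmonic.ne_zero]
    exact degree_eraseLead_lt hmonic.ne_zero
  have hsplit : (fun t => t ^ P.natDegree * conj (P.eval t)) =
      fun t => P.eval t * conj (P.eval t) - P.eraseLead.eval t * conj (P.eval t) := by
    ext t
    have hexpand := congrArg (eval t) P.eraseLead_add_C_mul_X_pow
    rw [hmonic.leadingCoeff, C_1, one_mul, eval_add, eval_X_pow] at hexpand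
    rw [← sub_mul, ← hexpand, add_sub_cancel_left]
  rw [hsplit, integral_sub (integrable P) (integrable P.eraseLead),
    hP.integral_mul_conj_eq_zero hlow, sub_zero, ← integral_complex_ofReal]
  simp_rw [Complex.mul_conj', Complex.ofReal_pow]

end Polynomial.IsOrthogonalToLowerDegree

theorem integral_eval_mul_conj_prod_of_monicClass {n : ℕ} {K : Fin n → Set ℂ}
    (hK : ∀ j, IsCompact (K j)) {μ : Fin n → Measure ℂ} [∀ j, IsFiniteMeasure (μ j)]
    (hμK : ∀ j, ∀ᵐ t ∂(μ j), t ∈ K j) {α : Fin n →₀ ℕ} {P : Fin n → ℂ[X]}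
    (hmonic : ∀ j, (P j).Monic) (hdeg : ∀ j, (P j).natDegree = α j)
    (horth : ∀ j, (P j).IsOrthogonalToLowerDegree (μ j)) {Q : MvPolynomial (Fin n) ℂ}
    (hQ : MonicClass α Q) :
    ∫ z, eval z Q * conj (∏ j, (P j).eval (z j)) ∂(Measure.pi μ) =
      ((∏ j, ∫ t, ‖(P j).eval t‖ ^ 2 ∂(μ j) : ℝ) : ℂ) := by
  set G : (Fin n → ℂ) → ℂ := fun z => ∏ j, (P j).eval (z j)
  have hmonomial (β : Fin n →₀ ℕ) : ∫ z, (∏ j, z j ^ β j) * conj (G z) ∂(Measure.pi μ) =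
      ∏ j, ∫ t, t ^ β j * conj ((P j).eval t) ∂(μ j) :=
    integral_prod_mul_conj_prod_eq_prod (fun j t => t ^ β j) fun j => (P j).eval
  have hintegrable (β : Fin n →₀ ℕ) :
      Integrable (fun z => (∏ j, z j ^ β j) * conj (G z)) (Measure.pi μ) :=
    memLp_one_iff_integrable.1 <| Continuous.memLp_of_ae_mem_compact (isCompact_univ_pi hK)
      (ae_mem_univ_pi hμK) (by fun_prop) 1
  have hα : α ∈ Q.support := by simp [hQ.1]
  calc ∫ z, eval z Q * conj (G z) ∂(Measure.pi μ)
      = ∑ β ∈ Q.support, Q.coeff β * ∫ z, (∏ j, z j ^ β j) * conj (G z) ∂(Measure.pi μ) := by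
        simp_rw [eval_eq', Finset.sum_mul, mul_assoc]
        rw [integral_finsetSum _ fun β _ => (hintegrable β).const_mul _]
        simp_rw [integral_const_mul]
    _ = Q.coeff α * ∫ z, (∏ j, z j ^ α j) * conj (G z) ∂(Measure.pi μ) := by
        refine Finset.sum_eq_single_of_mem α hα fun β hβ hne => ?_
        obtain ⟨k, hk⟩ := (hQ.2 β hne (mem_support_iff.1 hβ)).exists_lt
        rw [hmonomial, Finset.prod_eq_zero (Finset.mem_univ k)
          ((horth k).integral_pow_mul_conj_eq_zero (hdeg k ▸ hk)), mul_zero]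
    _ = ((∏ j, ∫ t, ‖(P j).eval t‖ ^ 2 ∂(μ j) : ℝ) : ℂ) := by
        rw [hQ.1, one_mul, hmonomial, Complex.ofReal_prod]
        refine Finset.prod_congr rfl fun j _ => ?_
        rw [← hdeg j]
        exact (horth j).integral_pow_natDegree_mul_conj (hK j) (hμK j) (hmonic j)

open MeasureTheory in
theorem prod_orthogonal_l2_minimal_general {n : ℕ}
    (K : Fin n → Set ℂ) (hKc : ∀ j, IsCompact (K j))
    (μ : Fin n → Measure ℂ) [∀ j, IsFiniteMeasure (μ j)]
    (hμ : ∀ j, μ j (K j)ᶜ = 0)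
    (α : Fin n →₀ ℕ)
    (P : Fin n → Polynomial ℂ)
    (hmonic : ∀ j, (P j).Monic) (hdeg : ∀ j, (P j).natDegree = α j)
    (horth : ∀ j, ∀ q : Polynomial ℂ, q.degree < ((α j : ℕ) : WithBot ℕ) →
      ∫ t, (P j).eval t * (starRingEnd ℂ) (q.eval t) ∂(μ j) = 0) :
    Real.sqrt (∫ z : Fin n → ℂ, ‖∏ j, (P j).eval (z j)‖ ^ 2 ∂(Measure.pi μ)) =
        ∏ j, Real.sqrt (∫ t, ‖(P j).eval t‖ ^ 2 ∂(μ j)) ∧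
      ∀ Q : MvPolynomial (Fin n) ℂ, MonicClass α Q →
        Real.sqrt (∫ z : Fin n → ℂ, ‖eval z Q‖ ^ 2 ∂(Measure.pi μ)) ≥
          ∏ j, Real.sqrt (∫ t, ‖(P j).eval t‖ ^ 2 ∂(μ j)) := by
  have hμK : ∀ j, ∀ᵐ t ∂(μ j), t ∈ K j := fun j => ae_iff.2 (hμ j)
  have horth' : ∀ j, (P j).IsOrthogonalToLowerDegree (μ j) :=
    fun j q hq => horth j q (hdeg j ▸ hq)
  have hnorm := integral_norm_prod_sq_eq_prod (μ := μ) fun j => (P j).eval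
  have hN : ∀ j, 0 ≤ ∫ t, ‖(P j).eval t‖ ^ 2 ∂(μ j) :=
    fun j => integral_nonneg fun _ => sq_nonneg _
  rw [← Real.sqrt_prod _ fun j _ => hN j, ← hnorm]
  refine ⟨rfl, fun Q hQ => ?_⟩
  have hmemLp {f : (Fin n → ℂ) → ℂ} (hf : Continuous f) : MemLp f 2 (Measure.pi μ) :=
    hf.memLp_of_ae_mem_compact (isCompact_univ_pi hKc) (ae_mem_univ_pi hμK) 2
  have hCS := norm_integral_mul_conj_le (hmemLp (continuous_eval Q))
    (hmemLp (f := fun z => ∏ j, (P j).eval (z j)) (by fun_prop))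
  rw [integral_eval_mul_conj_prod_of_monicClass hKc hμK hmonic hdeg horth' hQ, Complex.norm_real,
    Real.norm_of_nonneg (Finset.prod_nonneg fun j _ => hN j), ← hnorm] at hCS
  exact Real.sqrt_le_of_le_mul_sqrt (integral_nonneg fun _ => sq_nonneg _) (Real.sqrt_nonneg _) hCS

open MeasureTheory in
/-- the `L²(μ₁ ⊗ ⋯ ⊗ μₙ)` norm of the product of univariate monic
orthogonal polynomials factorizes, and this product minimizes the `L²` norm over the
monic class `𝒫(α)`. -/
theorem prod_orthogonal_l2_minimal {n : ℕ}
    (K : Fin n → Set ℂ) (hKc : ∀ j, IsCompact (K j)) (hKne : ∀ j, (K j).Nonempty)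
    (μ : Fin n → Measure ℂ) [∀ j, IsFiniteMeasure (μ j)]
    (hμ : ∀ j, μ j (K j)ᶜ = 0)
    (α : Fin n →₀ ℕ)
    (P : Fin n → Polynomial ℂ)
    (hmonic : ∀ j, (P j).Monic) (hdeg : ∀ j, (P j).natDegree = α j)
    (horth : ∀ j, ∀ q : Polynomial ℂ, q.degree < ((α j : ℕ) : WithBot ℕ) →
      ∫ t, (P j).eval t * (starRingEnd ℂ) (q.eval t) ∂(μ j) = 0) :
    Real.sqrt (∫ z : Fin n → ℂ, ‖∏ j, (P j).eval (z j)‖ ^ 2 ∂(Measure.pi μ)) =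
        ∏ j, Real.sqrt (∫ t, ‖(P j).eval t‖ ^ 2 ∂(μ j)) ∧
      ∀ Q : MvPolynomial (Fin n) ℂ, MonicClass α Q →
        Real.sqrt (∫ z : Fin n → ℂ, ‖eval z Q‖ ^ 2 ∂(Measure.pi μ)) ≥
          ∏ j, Real.sqrt (∫ t, ‖(P j).eval t‖ ^ 2 ∂(μ j)) :=
  prod_orthogonal_l2_minimal_general K hKc μ hμ α P hmonic hdeg horth
end
end

section
/- Let α ∈ ℕ^n and for each j = 1,…,n let x^{(j)}_0, x^{(j)}_1, …, x^{(j)}_{α_j} be pairwise distinct real numbers; set v_j'(x^{(j)}_i) := Π_{l ≠ i} (x^{(j)}_i − x^{(j)}_l) (with v_j'(x^{(j)}_0) := 1 when α_j = 0). For each grid point ξ = (x^{(1)}_{k_1},…,x^{(n)}_{k_n}) with 0 ≤ k_j ≤ α_j, set c(ξ) := Π_{j=1}^n 1 / v_j'(x^{(j)}_{k_j}). Then Σ_{ξ} c(ξ) ξ^α = 1, where the sum is over all Π_j (α_j + 1) grid points, and Σ_{ξ} c(ξ) ξ^β = 0 for every β ∈ ℕ^n such that β_k < α_k for some index k. In particular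 Σ_ξ c(ξ) G(ξ) = 0 for every polynomial G of total degree at most |α| whose coefficient on x^α is zero. -/
/-!
Both sums over the grid factor into products, over the coordinates `j`, of univariate divided
differences `∑ᵢ f(xᵢ) / ∏_{l ≠ i} (xᵢ - x_l)` on `α j + 1` nodes. Such a divided difference of a
polynomial of degree `≤ α j` is its coefficient of `X ^ α j` (Lagrange interpolation), so for
`f = X ^ e` with `e ≤ α j` it is `1` if `e = α j` and `0` otherwise. A polynomial `G` of total
degree `≤ |α|` without the monomial `x ^ α` only has monomials `x ^ d` with `d i < α i` for
some `i`, and each of them contributes `0`.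
-/

open Finset MvPolynomial

theorem Fintype.sum_prod_mul_prod {ι R : Type*} [Fintype ι] [DecidableEq ι] [CommSemiring R]
    {κ : ι → Type*} [∀ i, Fintype (κ i)] (f g : ∀ i, κ i → R) :
    ∑ k : ∀ i, κ i, (∏ i, f i (k i)) * ∏ i, g i (k i) = ∏ i, ∑ j, f i j * g i j := by
  simp only [Fintype.prod_sum, prod_mul_distrib]

theorem sum_pow_div_prod_sub_eq_ite {F : Type*} [Field F] {m e : ℕ} {x : Fin (m + 1) → F}
    (hx : Function.Injective x) (he : e ≤ m) :
    ∑ i, x i ^ e / ∏ l ∈ univ.erase i, (x i - x l) = if e = m then 1 else 0 := by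
  have hdeg : (Polynomial.X ^ e : Polynomial F).degree < #(univ : Finset (Fin (m + 1))) := by
    rw [Polynomial.degree_X_pow, card_univ, Fintype.card_fin]
    exact_mod_cast Nat.lt_succ_of_le he
  have h := Lagrange.coeff_eq_sum hx.injOn hdeg
  simp only [card_univ, Fintype.card_fin, Nat.add_sub_cancel, Polynomial.coeff_X_pow,
    Polynomial.eval_pow, Polynomial.eval_X] at h
  rw [← h]
  exact if_congr eq_comm rfl rfl

section Grid

variable {F : Type*} [Field F] {n : ℕ} {α : Fin n → ℕ} {x : (j : Fin n) → Fin (α j + 1) → F}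

theorem sum_grid_monomial_eq_prod (β : Fin n → ℕ) :
    ∑ k : (j : Fin n) → Fin (α j + 1),
        (∏ j, (∏ l ∈ univ.erase (k j), (x j (k j) - x j l))⁻¹) * ∏ j, x j (k j) ^ β j =
      ∏ j, ∑ i, x j i ^ β j / ∏ l ∈ univ.erase i, (x j i - x j l) := by
  rw [Fintype.sum_prod_mul_prod (fun j i => (∏ l ∈ univ.erase i, (x j i - x j l))⁻¹)
    (fun j i => x j i ^ β j)]
  simp only [inv_mul_eq_div]

theorem sum_grid_monomial_self (hx : ∀ j, Function.Injective (x j)) :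
    ∑ k : (j : Fin n) → Fin (α j + 1),
        (∏ j, (∏ l ∈ univ.erase (k j), (x j (k j) - x j l))⁻¹) * ∏ j, x j (k j) ^ α j = 1 := by
  rw [sum_grid_monomial_eq_prod]
  exact prod_eq_one fun j _ => by rw [sum_pow_div_prod_sub_eq_ite (hx j) le_rfl, if_pos rfl]

theorem sum_grid_monomial_eq_zero (hx : ∀ j, Function.Injective (x j)) {β : Fin n → ℕ}
    (hβ : ∃ i, β i < α i) :
    ∑ k : (j : Fin n) → Fin (α j + 1),
        (∏ j, (∏ l ∈ univ.erase (k j), (x j (k j) - x j l))⁻¹) * ∏ j, x j (k j) ^ β j = 0 := by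
  obtain ⟨i, hi⟩ := hβ
  rw [sum_grid_monomial_eq_prod]
  exact prod_eq_zero (mem_univ i) <| by
    rw [sum_pow_div_prod_sub_eq_ite (hx i) hi.le, if_neg hi.ne]

end Grid

theorem MvPolynomial.exists_lt_of_mem_support_of_totalDegree_le {σ R : Type*} [Fintype σ]
    [CommSemiring R] {G : MvPolynomial σ R} {α : σ → ℕ} (hdeg : G.totalDegree ≤ ∑ j, α j)
    (hα : G.coeff (Finsupp.equivFunOnFinite.symm α) = 0) {d : σ →₀ ℕ} (hd : d ∈ G.support) :
    ∃ i, d i < α i := by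
  by_contra! hle
  have hsum : ∑ j, d j ≤ ∑ j, α j := by
    simpa only [Finsupp.sum_fintype, implies_true] using (le_totalDegree hd).trans hdeg
  have hdα : ⇑d = α := by
    ext j
    exact ((sum_eq_sum_iff_of_le fun j _ => hle j).mp
      ((sum_le_sum fun j _ => hle j).antisymm hsum) j (mem_univ j)).symm
  rw [mem_support_iff, ← Finsupp.equivFunOnFinite_symm_coe d, hdα] at hd
  exact hd hα

/-- divided-difference identities on a product grid. With distinct real
nodes `x (j) 0, …, x (j) (α j)` in each variable, weights
`c ξ = ∏_j 1 / v_j'(x (j) (k j))`, the weighted sum of `ξ^α` over the grid equals `1`,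
the weighted sum of `ξ^β` vanishes whenever `β_k < α_k` for some `k`, and consequently
the weighted sum of `G(ξ)` vanishes for every polynomial `G` of total degree at most
`|α|` with zero coefficient on `x^α`. -/
theorem divided_difference_grid {n : ℕ} (α : Fin n → ℕ)
    (x : (j : Fin n) → Fin (α j + 1) → ℝ) (hx : ∀ j, Function.Injective (x j)) :
    (∑ k : (j : Fin n) → Fin (α j + 1),
        (∏ j, (∏ l ∈ Finset.univ.erase (k j), (x j (k j) - x j l))⁻¹) *
          ∏ j, x j (k j) ^ α j = 1) ∧
    (∀ β : Fin n → ℕ, (∃ i, β i < α i) →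
      ∑ k : (j : Fin n) → Fin (α j + 1),
        (∏ j, (∏ l ∈ Finset.univ.erase (k j), (x j (k j) - x j l))⁻¹) *
          ∏ j, x j (k j) ^ β j = 0) ∧
    (∀ G : MvPolynomial (Fin n) ℝ, G.totalDegree ≤ ∑ j, α j →
      G.coeff (Finsupp.equivFunOnFinite.symm α) = 0 →
      ∑ k : (j : Fin n) → Fin (α j + 1),
        (∏ j, (∏ l ∈ Finset.univ.erase (k j), (x j (k j) - x j l))⁻¹) *
          eval (fun j => x j (k j)) G = 0) := by
  refine ⟨sum_grid_monomial_self hx, fun β hβ => sum_grid_monomial_eq_zero hx hβ, ?_⟩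
  intro G hdeg hα
  simp only [eval_eq', mul_sum]
  rw [sum_comm]
  refine sum_eq_zero fun d hd => ?_
  simp only [mul_left_comm _ (coeff d G), ← mul_sum]
  rw [sum_grid_monomial_eq_zero hx (exists_lt_of_mem_support_of_totalDegree_le hdeg hα hd),
    mul_zero]
end

section
/- For j = 1,…,n let K_j ⊂ ℝ be a nonempty compact set and ŵ_j : K_j → [0,∞) a bounded function; set K = K_1 × ⋯ × K_n and ŵ(x_1,…,x_n) = ŵ_1(x_1)⋯ŵ_n(x_n). Let α ∈ ℕ^n and for each j let T_j be a monic real polynomial of degree α_j with M_j := sup_{t∈K_j} ŵ_j(t)|T_j(t)| > 0, and suppose there exist points x^{(j)}_0 > x^{(j)}_1 > ⋯ > x^{(j)}_{α_j} in K_j such that ŵ_j(x^{(j)}_k) T_j(x^{(j)}_k) = (−1)^k M_j for k = 0,…,α_j (for α_j = 0 this means T_j = 1 and ŵ_j attains its supremum M_j > 0 at some point of K_j). Then Q(x_1,…,x_n) := Π_{j=1}^n T_j(x_j) is a weighted Chebyshev polynomial for ŵ on K: for every polynomial P (with complex coefficients) whose coefficient on x^α is 1 and whose total degree is at most |α|,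 sup_{x∈K} |P(x)| ŵ(x) ≥ sup_{x∈K} |Q(x)| ŵ(x) = M_1 ⋯ M_n. -/
/-!
For nodes `x₀ > ⋯ > x_m` the divided difference `p ↦ ∑ₖ cₖ p(xₖ)`, with the Lagrange nodal
weights `cₖ = ∏_{i ≠ k} (xₖ - xᵢ)⁻¹`, returns the coefficient of `t^m` whenever `deg p ≤ m`, and
`(-1)^k cₖ > 0`. Applied to an alternating `T_j` it gives `∑ₖ |cₖ| / ŵ_j(xₖ) = 1 / M_j`.
The tensor product of these functionals over the grid of alternation nodes sends every `P`
with `coeff_α P = 1` and `deg P ≤ |α|` to `1`, hence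
`1 ≤ ∑_g |c_g| |P(x_g)| ≤ (∏_j M_j)⁻¹ · sup_K ŵ|P|`.
Meanwhile `ŵ|Q|` factors over the coordinates and attains `∏_j M_j` at the first nodes.
-/

open Finset MvPolynomial

namespace Lagrange

open Polynomial

variable {F ι : Type*} [Field F] [DecidableEq ι] {s : Finset ι} {v : ι → F}

theorem sum_nodalWeight_mul_eval (hvs : Set.InjOn v s) {p : F[X]} (hp : p.degree < #s) :
    ∑ i ∈ s, nodalWeight s v i * p.eval (v i) = p.coeff (#s - 1) := by
  rw [coeff_eq_sum hvs hp]
  refine sum_congr rfl fun i _ => ?_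
  rw [nodalWeight, prod_inv_distrib, div_eq_mul_inv, mul_comm]

theorem sum_nodalWeight_mul_pow (hvs : Set.InjOn v s) {r : ℕ} (hr : r < #s) :
    ∑ i ∈ s, nodalWeight s v i * v i ^ r = if r = #s - 1 then 1 else 0 := by
  simpa [Polynomial.coeff_X_pow, eq_comm] using
    sum_nodalWeight_mul_eval hvs (p := Polynomial.X ^ r) (by rw [degree_X_pow]; exact_mod_cast hr)

theorem neg_one_pow_mul_nodalWeight_pos {m : ℕ} {x : Fin m → ℝ} (hx : StrictAnti x)
    (k : Fin m) : 0 < (-1) ^ (k : ℕ) * nodalWeight univ x k := by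
  have hsign : (-1 : ℝ) ^ (k : ℕ) = ∏ j ∈ univ.erase k, if j < k then -1 else 1 := by
    rw [prod_ite, prod_const, prod_const_one, mul_one]
    congr
    rw [← Fin.card_Iio k]
    congr 1
    ext j
    simp only [mem_filter, mem_erase, mem_univ, mem_Iio, and_true]
    grind
  rw [hsign, nodalWeight, ← prod_mul_distrib]
  refine prod_pos fun j hj => ?_
  split_ifs with hjk
  · simpa using hx hjk
  · have hkj : k < j := lt_of_le_of_ne (not_lt.1 hjk) (ne_of_mem_erase hj).symm
    simpa using hx hkj

theorem sum_abs_nodalWeight_div_eq_inv {m : ℕ} {x : Fin (m + 1) → ℝ} (hx : StrictAnti x)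
    {T : ℝ[X]} (hT : T.Monic) (hTdeg : T.natDegree = m) {w : ℝ → ℝ} {M : ℝ} (hM : M ≠ 0)
    (halt : ∀ k, w (x k) * T.eval (x k) = (-1) ^ (k : ℕ) * M) :
    ∑ k, |nodalWeight univ x k| / w (x k) = M⁻¹ := by
  have hw : ∀ k, w (x k) ≠ 0 := fun k h => by simpa [h, hM] using halt k
  have hterm : ∀ k,
      nodalWeight univ x k * T.eval (x k) = M * (|nodalWeight univ x k| / w (x k)) := by
    intro k
    have habs : |nodalWeight univ x k| = (-1) ^ (k : ℕ) * nodalWeight univ x k := by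
      rw [← abs_of_pos (neg_one_pow_mul_nodalWeight_pos hx k), abs_mul, abs_neg_one_pow, one_mul]
    rw [habs]
    field_simp [hw k]
    linear_combination nodalWeight univ x k * halt k
  have hsum : ∑ k, nodalWeight univ x k * T.eval (x k) = 1 := by
    have hTdeg' : T.degree < #(univ : Finset (Fin (m + 1))) := by
      rw [degree_eq_natDegree hT.ne_zero, hTdeg, card_univ, Fintype.card_fin]
      exact_mod_cast m.lt_succ_self
    rw [sum_nodalWeight_mul_eval hx.injective.injOn hTdeg', card_univ, Fintype.card_fin,
      Nat.add_sub_cancel, ← hTdeg]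
    exact hT.coeff_natDegree
  rw [sum_congr rfl fun k _ => hterm k, ← mul_sum] at hsum
  exact eq_inv_of_mul_eq_one_right hsum

end Lagrange

theorem Finset.exists_lt_of_sum_le_of_ne {ι M : Type*} [AddCommMonoid M] [LinearOrder M]
    [IsOrderedCancelAddMonoid M] {s : Finset ι} {f g : ι → M}
    (hle : ∑ i ∈ s, f i ≤ ∑ i ∈ s, g i) (hne : ∃ i ∈ s, f i ≠ g i) : ∃ i ∈ s, f i < g i := by
  by_contra! hge
  obtain ⟨i, hi, hfg⟩ := hne
  exact (sum_lt_sum hge ⟨i, hi, (hge i hi).lt_of_ne hfg.symm⟩).not_ge hle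

theorem MvPolynomial.sum_prod_mul_eval_eq_coeff {σ R : Type*} [Fintype σ] [DecidableEq σ]
    [CommSemiring R] {κ : σ → Type*} [∀ j, Fintype (κ j)] (c x : ∀ j, κ j → R) (α : σ →₀ ℕ)
    (hmoment : ∀ j, ∀ r ≤ α j, ∑ k, c j k * x j k ^ r = if r = α j then 1 else 0)
    {P : MvPolynomial σ R} (hP : P.totalDegree ≤ ∑ j, α j) :
    ∑ g : ∀ j, κ j, (∏ j, c j (g j)) * eval (fun j => x j (g j)) P = P.coeff α := by
  have hmonomial : ∀ d ∈ P.support,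
      ∑ g : ∀ j, κ j, (∏ j, c j (g j)) * ∏ j, x j (g j) ^ d j = if d = α then 1 else 0 := by
    intro d hd
    simp_rw [← prod_mul_distrib]
    rw [← Fintype.prod_sum fun j k => c j k * x j k ^ d j]
    split_ifs with hdα
    · subst hdα
      exact prod_eq_one fun j _ => by rw [hmoment j _ le_rfl, if_pos rfl]
    · have hdeg : ∑ j, d j ≤ ∑ j, α j := by
        rw [← Finsupp.degree_eq_sum]
        exact (le_totalDegree hd).trans hP
      obtain ⟨j, -, hj⟩ := exists_lt_of_sum_le_of_ne hdeg
        (by simpa [Finsupp.ext_iff] using hdα)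
      exact prod_eq_zero (mem_univ j) (by rw [hmoment j _ hj.le, if_neg hj.ne])
  calc ∑ g : ∀ j, κ j, (∏ j, c j (g j)) * eval (fun j => x j (g j)) P
      = ∑ d ∈ P.support, P.coeff d *
          ∑ g : ∀ j, κ j, (∏ j, c j (g j)) * ∏ j, x j (g j) ^ d j := by
        simp_rw [eval_eq', mul_sum]
        rw [sum_comm]
        refine sum_congr rfl fun d _ => sum_congr rfl fun g _ => by ring
    _ = P.coeff α := by
        rw [sum_congr rfl fun d hd => by rw [hmonomial d hd]]
        simp only [mul_ite, mul_one, mul_zero, sum_ite_eq']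
        split_ifs with h
        · rfl
        · exact (notMem_support_iff.1 h).symm

theorem norm_sum_mul_le_sum_div_mul {ι 𝕜 : Type*} [Fintype ι] [NormedField 𝕜]
    (a f : ι → 𝕜) {W : ι → ℝ} {S : ℝ} (hW : ∀ i, 0 < W i) (hS : ∀ i, ‖f i‖ * W i ≤ S) :
    ‖∑ i, a i * f i‖ ≤ (∑ i, ‖a i‖ / W i) * S := by
  rw [sum_mul]
  refine (norm_sum_le _ _).trans (sum_le_sum fun i _ => ?_)
  rw [norm_mul, div_mul_eq_mul_div, le_div_iff₀ (hW i), mul_assoc]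
  exact mul_le_mul_of_nonneg_left (hS i) (norm_nonneg _)

theorem IsCompact.bddAbove_image_norm_mul {X E : Type*} [TopologicalSpace X]
    [SeminormedAddCommGroup E] {K : Set X} (hK : IsCompact K) {f : X → E}
    (hf : ContinuousOn f K) {w : X → ℝ} (hw0 : ∀ x ∈ K, 0 ≤ w x) (hw : BddAbove (w '' K)) :
    BddAbove ((fun x => ‖f x‖ * w x) '' K) := by
  obtain ⟨B, hB⟩ := hK.exists_bound_of_continuousOn hf
  obtain ⟨C, hC⟩ := hw
  refine ⟨max B 0 * C, ?_⟩
  rintro _ ⟨x, hx, rfl⟩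
  exact mul_le_mul ((hB x hx).trans (le_max_left B 0)) (hC ⟨x, hx, rfl⟩) (hw0 x hx)
    (le_max_right B 0)

theorem bddAbove_image_pi_prod {ι : Type*} [Fintype ι] {X : ι → Type*} {K : ∀ j, Set (X j)}
    {f : ∀ j, X j → ℝ} (hf0 : ∀ j, ∀ t ∈ K j, 0 ≤ f j t) (hf : ∀ j, BddAbove (f j '' K j)) :
    BddAbove ((fun x => ∏ j, f j (x j)) '' Set.univ.pi K) := by
  choose C hC using hf
  refine ⟨∏ j, C j, ?_⟩
  rintro _ ⟨x, hx, rfl⟩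
  exact prod_le_prod (fun j _ => hf0 j _ (hx j trivial))
    fun j _ => hC j ⟨x j, hx j trivial, rfl⟩

theorem IsGreatest.image_pi_prod {ι : Type*} [Fintype ι] {X : ι → Type*} {K : ∀ j, Set (X j)}
    {f : ∀ j, X j → ℝ} {M : ι → ℝ} (hf0 : ∀ j, ∀ t ∈ K j, 0 ≤ f j t)
    (hM : ∀ j, IsGreatest (f j '' K j) (M j)) :
    IsGreatest ((fun x => ∏ j, f j (x j)) '' Set.univ.pi K) (∏ j, M j) := by
  choose x hxK hxM using fun j => (hM j).1
  refine ⟨⟨x, fun j _ => hxK j, prod_congr rfl fun j _ => hxM j⟩, ?_⟩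
  rintro _ ⟨y, hy, rfl⟩
  exact prod_le_prod (fun j _ => hf0 j _ (hy j trivial))
    fun j _ => (hM j).2 ⟨y j, hy j trivial, rfl⟩

theorem prod_le_of_norm_eval_mul_prod_le_on_grid {σ : Type*} [Fintype σ] [DecidableEq σ]
    {α : σ →₀ ℕ} {xs : ∀ j, Fin (α j + 1) → ℝ} (hxs : ∀ j, Function.Injective (xs j))
    {w : σ → ℝ → ℝ} (hw : ∀ j k, 0 < w j (xs j k)) {M : σ → ℝ} (hM : ∀ j, 0 < M j)
    (hdual : ∀ j, ∑ k, |Lagrange.nodalWeight univ (xs j) k| / w j (xs j k) = (M j)⁻¹)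
    {P : MvPolynomial σ ℂ} (hPα : P.coeff α = 1) (hPdeg : P.totalDegree ≤ ∑ j, α j) {S : ℝ}
    (hS : ∀ g : ∀ j, Fin (α j + 1),
      ‖eval (fun j => (xs j (g j) : ℂ)) P‖ * ∏ j, w j (xs j (g j)) ≤ S) :
    ∏ j, M j ≤ S := by
  set c : ∀ j, Fin (α j + 1) → ℝ := fun j => Lagrange.nodalWeight univ (xs j)
  have hfunctional : ∑ g : ∀ j, Fin (α j + 1),
      (∏ j, (c j (g j) : ℂ)) * eval (fun j => (xs j (g j) : ℂ)) P = 1 := by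
    rw [← hPα]
    refine sum_prod_mul_eval_eq_coeff (fun j k => (c j k : ℂ)) (fun j k => (xs j k : ℂ)) α
      (fun j r hr => ?_) hPdeg
    have h := Lagrange.sum_nodalWeight_mul_pow (hxs j).injOn (s := univ) (r := r)
      (by simpa using Nat.lt_succ_of_le hr)
    rw [card_univ, Fintype.card_fin, Nat.add_sub_cancel] at h
    have h' := congrArg Complex.ofReal h
    push_cast [apply_ite Complex.ofReal] at h'
    exact h'
  have hnorms : ∑ g : ∀ j, Fin (α j + 1),
      ‖∏ j, (c j (g j) : ℂ)‖ / ∏ j, w j (xs j (g j)) = (∏ j, M j)⁻¹ := by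
    simp_rw [norm_prod, Complex.norm_real, Real.norm_eq_abs, ← prod_div_distrib]
    rw [← Fintype.prod_sum fun j k => |c j k| / w j (xs j k), ← prod_inv_distrib]
    exact prod_congr rfl fun j _ => hdual j
  have hbound := norm_sum_mul_le_sum_div_mul
    (fun g : ∀ j, Fin (α j + 1) => ∏ j, (c j (g j) : ℂ))
    (fun g => eval (fun j => (xs j (g j) : ℂ)) P) (fun g => prod_pos fun j _ => hw j (g j)) hS
  rwa [hfunctional, norm_one, hnorms, le_inv_mul_iff₀ (prod_pos fun j _ => hM j), mul_one]
    at hbound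

theorem prod_weighted_chebyshev_general {n : ℕ}
    (K : Fin n → Set ℝ) (hKc : ∀ j, IsCompact (K j))
    (w : Fin n → ℝ → ℝ)
    (hw_nonneg : ∀ j, ∀ t ∈ K j, 0 ≤ w j t) (hw_bdd : ∀ j, ∃ C, ∀ t ∈ K j, w j t ≤ C)
    (α : Fin n →₀ ℕ)
    (T : Fin n → Polynomial ℝ)
    (hmonic : ∀ j, (T j).Monic) (hdeg : ∀ j, (T j).natDegree = α j)
    (M : Fin n → ℝ)
    (hM : ∀ j, M j = sSup ((fun t => w j t * |(T j).eval t|) '' K j))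
    (hMpos : ∀ j, 0 < M j)
    (halt : ∀ j, ∃ x : Fin (α j + 1) → ℝ, StrictAnti x ∧ (∀ k, x k ∈ K j) ∧
      ∀ k : Fin (α j + 1), w j (x k) * (T j).eval (x k) = (-1 : ℝ) ^ (k : ℕ) * M j) :
    (∀ P : MvPolynomial (Fin n) ℂ, P.coeff α = 1 → P.totalDegree ≤ ∑ j, α j →
      sSup ((fun x : Fin n → ℝ =>
          ‖eval (fun j => (x j : ℂ)) P‖ * ∏ j, w j (x j)) ''
            Set.univ.pi K) ≥
        sSup ((fun x : Fin n → ℝ =>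
          |∏ j, (T j).eval (x j)| * ∏ j, w j (x j)) '' Set.univ.pi K)) ∧
    sSup ((fun x : Fin n → ℝ =>
        |∏ j, (T j).eval (x j)| * ∏ j, w j (x j)) '' Set.univ.pi K) = ∏ j, M j := by
  choose xs hxs_anti hxs_mem hxs_alt using halt
  have hw_bdd' : ∀ j, BddAbove (w j '' K j) := fun j =>
    (hw_bdd j).imp fun _ hC => Set.forall_mem_image.2 hC
  have hgreatest : ∀ j, IsGreatest ((fun t => w j t * |(T j).eval t|) '' K j) (M j) := by
    intro j
    refine ⟨⟨xs j 0, hxs_mem j 0, ?_⟩, fun _ hy => hM j ▸ le_csSup ?_ hy⟩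
    · dsimp only
      rw [← abs_of_nonneg (hw_nonneg j _ (hxs_mem j 0)), ← abs_mul, hxs_alt j 0]
      simp [(hMpos j).le]
    · simpa only [mul_comm (w j _), Real.norm_eq_abs] using
        (hKc j).bddAbove_image_norm_mul (T j).continuous.continuousOn (hw_nonneg j) (hw_bdd' j)
  have hQ : sSup ((fun x : Fin n → ℝ =>
      |∏ j, (T j).eval (x j)| * ∏ j, w j (x j)) '' Set.univ.pi K) = ∏ j, M j := by
    rw [← (IsGreatest.image_pi_prod (fun j t ht => mul_nonneg (hw_nonneg j t ht) (abs_nonneg _))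
      hgreatest).csSup_eq]
    simp_rw [abs_prod, ← prod_mul_distrib, mul_comm]
  refine ⟨fun P hPα hPdeg => ?_, hQ⟩
  have hbdd := (isCompact_univ_pi hKc).bddAbove_image_norm_mul
    ((continuous_eval P).comp (continuous_pi fun j =>
      Complex.continuous_ofReal.comp (continuous_apply j))).continuousOn
    (fun x hx => prod_nonneg fun j _ => hw_nonneg j _ (hx j trivial))
    (bddAbove_image_pi_prod hw_nonneg hw_bdd')
  have hw_pos : ∀ j k, 0 < w j (xs j k) := fun j k =>
    (hw_nonneg j _ (hxs_mem j k)).lt_of_ne' fun h => by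
      simpa [h, (hMpos j).ne'] using hxs_alt j k
  rw [ge_iff_le, hQ]
  exact prod_le_of_norm_eval_mul_prod_le_on_grid (fun j => (hxs_anti j).injective) hw_pos hMpos
    (fun j => Lagrange.sum_abs_nodalWeight_div_eq_inv (hxs_anti j) (hmonic j) (hdeg j)
      (hMpos j).ne' (hxs_alt j))
    hPα hPdeg fun g => le_csSup hbdd ⟨_, fun j _ => hxs_mem j (g j), rfl⟩

/-- Theorem 4.5: if each `T j` is a monic real polynomial of degree `α j`
satisfying the weighted alternation property on `K j ⊂ ℝ` with value `M j > 0`, then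
`Q(x) = ∏_j T j (x j)` is a weighted Chebyshev polynomial for
`ŵ(x) = ∏_j ŵ_j (x j)` on `K = K₁ × ⋯ × Kₙ`: every complex polynomial `P` with
coefficient `1` on `x^α` and total degree at most `|α|` satisfies
`sup_K |P| ŵ ≥ sup_K |Q| ŵ = M₁ ⋯ Mₙ`. -/
theorem prod_weighted_chebyshev {n : ℕ}
    (K : Fin n → Set ℝ) (hKc : ∀ j, IsCompact (K j)) (hKne : ∀ j, (K j).Nonempty)
    (w : Fin n → ℝ → ℝ)
    (hw_nonneg : ∀ j, ∀ t ∈ K j, 0 ≤ w j t) (hw_bdd : ∀ j, ∃ C, ∀ t ∈ K j, w j t ≤ C)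
    (α : Fin n →₀ ℕ)
    (T : Fin n → Polynomial ℝ)
    (hmonic : ∀ j, (T j).Monic) (hdeg : ∀ j, (T j).natDegree = α j)
    (M : Fin n → ℝ)
    (hM : ∀ j, M j = sSup ((fun t => w j t * |(T j).eval t|) '' K j))
    (hMpos : ∀ j, 0 < M j)
    (halt : ∀ j, ∃ x : Fin (α j + 1) → ℝ, StrictAnti x ∧ (∀ k, x k ∈ K j) ∧
      ∀ k : Fin (α j + 1), w j (x k) * (T j).eval (x k) = (-1 : ℝ) ^ (k : ℕ) * M j) :
    (∀ P : MvPolynomial (Fin n) ℂ, P.coeff α = 1 → P.totalDegree ≤ ∑ j, α j →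
      sSup ((fun x : Fin n → ℝ =>
          ‖eval (fun j => (x j : ℂ)) P‖ * ∏ j, w j (x j)) ''
            Set.univ.pi K) ≥
        sSup ((fun x : Fin n → ℝ =>
          |∏ j, (T j).eval (x j)| * ∏ j, w j (x j)) '' Set.univ.pi K)) ∧
    sSup ((fun x : Fin n → ℝ =>
        |∏ j, (T j).eval (x j)| * ∏ j, w j (x j)) '' Set.univ.pi K) = ∏ j, M j :=
  prod_weighted_chebyshev_general K hKc w hw_nonneg hw_bdd α T hmonic hdeg M hM hMpos halt
end
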